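/- Let n ≥ 3 be an integer, m = n − 1, and ρ = 1/(m+1) = 1/n. Then there is no solution (x, y) of the system (S_ρ) on all of ℝ such that x′(t) < 0 and 0 < x(t) < 1 for every t ∈ ℝ and (x(t), y(t)) → (1, 0) as t → −∞. -/

import Mathlib

/-- `IsEinsteinSystemSol m ρ x y` means the pair of differentiable functions `(x, y)` solves
the planar system `(S_ρ)`:
`(1 − 2mρ)·x′ = (m−1)(1−mρ)(1 − x²) − x·y` and
`(1 − 2mρ)·y′ = −m(m−1)(1−(m+1)ρ)(1 − x²) + (1 + m − 4mρ)·x·y`,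
arising from rotationally symmetric gradient steady ρ-Einstein solitons. -/
def IsEinsteinSystemSol (m ρ : ℝ) (x y : ℝ → ℝ) : Prop :=
  Differentiable ℝ x ∧ Differentiable ℝ y ∧
    (∀ t : ℝ, (1 - 2 * m * ρ) * deriv x t =
      (m - 1) * (1 - m * ρ) * (1 - x t ^ 2) - x t * y t) ∧
    (∀ t : ℝ, (1 - 2 * m * ρ) * deriv y t =
      -(m * (m - 1) * (1 - (m + 1) * ρ) * (1 - x t ^ 2)) + (1 + m - 4 * m * ρ) * x t * y t)

/-!
For `ρ = 1/(m+1)` the `y`-equation decouples to `y' = -(m-1)·x·y`, so `y²` is nonincreasing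
while `x > 0`; as `y → 0` at `-∞`, this forces `y ≡ 0`. Then `x` solves the Riccati equation
`x' = x² - 1`, whose slope stays below `x(0)² - 1 < 0` for `t ≥ 0`, so `x` becomes negative in
finite time.
-/

open Filter Topology Set

namespace IsEinsteinSystemSol

variable {m : ℝ} {x y : ℝ → ℝ}

theorem deriv_snd_eq (hm : 1 < m) (h : IsEinsteinSystemSol m (1 / (m + 1)) x y)
    (t : ℝ) : deriv y t = -((m - 1) * x t) * y t := by
  have h2 := h.2.2.2 t
  have : m + 1 ≠ 0 := by linarith
  field_simp at h2
  have key : (m - 1) * deriv y t = (m - 1) * (-((m - 1) * x t) * y t) := by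
    linear_combination -h2
  exact mul_left_cancel₀ (by linarith) key

theorem deriv_fst_eq (hm : 1 < m) (h : IsEinsteinSystemSol m (1 / (m + 1)) x y)
    (t : ℝ) : deriv x t = x t ^ 2 - 1 + (m + 1) / (m - 1) * x t * y t := by
  have h1 := h.2.2.1 t
  have : m + 1 ≠ 0 := by linarith
  have : m - 1 ≠ 0 := by linarith
  field_simp at h1 ⊢
  linear_combination -h1

end IsEinsteinSystemSol

theorem eq_zero_of_deriv_eq_neg_mul_of_tendsto_atBot {y a : ℝ → ℝ} (hy : Differentiable ℝ y)
    (hy' : ∀ t, deriv y t = -a t * y t) (ha : ∀ t, 0 ≤ a t)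
    (hlim : Tendsto y atBot (𝓝 0)) (t : ℝ) : y t = 0 := by
  have hanti : Antitone (fun t => y t ^ 2) := by
    refine antitone_of_deriv_nonpos (hy.pow 2) fun s => ?_
    have hderiv : deriv (fun t => y t ^ 2) s = -2 * a s * y s ^ 2 := by
      rw [deriv_fun_pow (hy s), hy' s]; ring
    rw [hderiv]
    nlinarith [ha s, sq_nonneg (y s)]
  have hsq : y t ^ 2 ≤ 0 := by simpa using hanti.ge_of_tendsto (hlim.pow 2) t
  exact pow_eq_zero_iff two_ne_zero |>.mp (le_antisymm hsq (sq_nonneg _))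

theorem not_forall_mem_Ioo_of_deriv_eq_sq_sub_one {x : ℝ → ℝ} (hx : Differentiable ℝ x)
    (hx' : ∀ t, deriv x t = x t ^ 2 - 1) : ¬ ∀ t, x t ∈ Ioo 0 1 := by
  intro hbd
  have hanti : Antitone x := antitone_of_deriv_nonpos hx fun t => by
    rw [hx' t]; nlinarith [(hbd t).1, (hbd t).2]
  set δ := 1 - x 0 ^ 2
  have hδ : 0 < δ := by nlinarith [(hbd 0).1, (hbd 0).2]
  have hslope : ∀ t ∈ interior (Ici (0 : ℝ)), deriv x t ≤ -δ := fun t ht => by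
    rw [interior_Ici] at ht
    have := hanti (le_of_lt ht)
    rw [hx' t]; nlinarith [(hbd t).1]
  have hdrop := (convex_Ici 0).image_sub_le_mul_sub_of_deriv_le hx.continuous.continuousOn
    hx.differentiableOn hslope 0 self_mem_Ici (1 / δ) (by simp [hδ.le]) (by positivity)
  field_simp at hdrop
  linarith [(hbd (1 / δ)).1, (hbd 0).2]

/-- Case 5 of Theorem 4.2: for `ρ = 1/(m+1) = 1/n` there is no global trajectory of the
system `(S_ρ)` with `x′ < 0`, `0 < x < 1` emanating from the equilibrium `(1,0)` at `t = -∞`. -/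
theorem no_steady_soliton_trajectory_case5 (n : ℕ) (hn : 3 ≤ n) (m ρ : ℝ)
    (hm : m = (n : ℝ) - 1) (hρ : ρ = 1 / (m + 1)) :
    ¬ ∃ x y : ℝ → ℝ, IsEinsteinSystemSol m ρ x y ∧
      (∀ t : ℝ, deriv x t < 0) ∧ (∀ t : ℝ, 0 < x t ∧ x t < 1) ∧
      Filter.Tendsto (fun t => (x t, y t)) Filter.atBot (nhds (1, 0)) := by
  rintro ⟨x, y, hsol, -, hbd, hlim⟩
  subst hρ
  have hm1 : 1 < m := by
    have : (3 : ℝ) ≤ n := by exact_mod_cast hn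
    linarith
  have hy0 : ∀ t, y t = 0 :=
    eq_zero_of_deriv_eq_neg_mul_of_tendsto_atBot hsol.2.1 (hsol.deriv_snd_eq hm1)
      (fun t => mul_nonneg (by linarith) (hbd t).1.le) hlim.snd_nhds
  refine not_forall_mem_Ioo_of_deriv_eq_sq_sub_one hsol.1 (fun t => ?_) hbd
  simp [hsol.deriv_fst_eq hm1 t, hy0 t]
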